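/- Let 0 < l_1, 0 < l_2, l_1 + l_2 < 1, and let (X_{1,a}, X_{2,a}) be the first two coordinates of a Dirichlet D(a l_1, a l_2, a(1-l_1-l_2)) random vector. Then the joint density of (√a(X_{1,a}-l_1), √a(X_{2,a}-l_2)) converges pointwise as a → ∞ to the bivariate normal density with mean zero and covariance matrix Σ = [[l_1(1-l_1), -l_1 l_2], [-l_1 l_2, l_2(1-l_2)]]. -/

import Mathlib

/-!
Write `k₁ = y₁`, `k₂ = y₂`, `k₃ = -(y₁ + y₂)` and `l₃ = 1 - l₁ - l₂`. For large `a` the scaled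
density is `exp` of `log Γ(a) - ∑ log Γ(a lᵢ) - log a + ∑ (a lᵢ - 1) log (lᵢ + kᵢ / √a)`.
Stirling's formula `log Γ(x) = (x - 1/2) log x - x + log (2π) / 2 + o(1)` holds for real `x`
because log-convexity of `Γ` (the Bohr–Mollerup bounds) pins `log Γ` between consecutive
integers, where it is the factorial version. After Stirling, the powers of `a` cancel, the
terms `√a kᵢ` from the first-order Taylor expansion of `log (1 + u)` cancel since `∑ kᵢ = 0`, and
the second-order terms leave `-∑ kᵢ² / (2 lᵢ)`, which is `-yᵀ Σ⁻¹ y / 2`; the constants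
`-log (2π) - ∑ log lᵢ / 2` give the normalisation `1 / (2π √det Σ)`.
-/

open MeasureTheory Filter Matrix

/-- The density of the Dirichlet distribution `D(a₁, a₂, a₃)` in the first two coordinates. -/
noncomputable def dirichletPDF2 (a₁ a₂ a₃ : ℝ) (x₁ x₂ : ℝ) : ℝ :=
  if 0 ≤ x₁ ∧ 0 ≤ x₂ ∧ x₁ + x₂ ≤ 1 then
    Real.Gamma (a₁ + a₂ + a₃) / (Real.Gamma a₁ * Real.Gamma a₂ * Real.Gamma a₃) *
      x₁ ^ (a₁ - 1) * x₂ ^ (a₂ - 1) * (1 - x₁ - x₂) ^ (a₃ - 1)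
  else 0

open Real Topology

noncomputable def stirlingError (x : ℝ) : ℝ := log (Gamma x) - ((x - 1 / 2) * log x - x)

lemma stirlingError_nat_add_one {n : ℕ} (hn : n ≠ 0) :
    stirlingError (n + 1) =
      log (Stirling.stirlingSeq n) + log 2 / 2 + 1 - (n + 1 / 2) * log (1 + 1 / n) := by
  have hn0 : (0 : ℝ) < n := by positivity
  have hlog : log (n + 1) = log n + log (1 + 1 / n) := by
    rw [← log_mul hn0.ne' (by positivity)]
    field_simp
  have hfact : log (n.factorial : ℝ) =
      log (Stirling.stirlingSeq n) + log 2 / 2 + log n / 2 + n * log n - n := by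
    have h := Stirling.log_stirlingSeq_formula n
    rw [log_mul two_ne_zero hn0.ne', log_div hn0.ne' (exp_pos 1).ne', log_exp] at h
    linarith
  rw [stirlingError, Gamma_nat_eq_factorial, hfact, hlog]
  ring

lemma tendsto_stirlingError_nat :
    Tendsto (fun n : ℕ => stirlingError n) atTop (𝓝 (log (2 * π) / 2)) := by
  have hlog : Tendsto (fun n : ℕ => log (1 + 1 / n)) atTop (𝓝 0) := by
    simpa using (tendsto_one_div_atTop_nhds_zero_nat.const_add (1 : ℝ)).log (by norm_num)
  have hmul : Tendsto (fun n : ℕ => (n + 1 / 2 : ℝ) * log (1 + 1 / n)) atTop (𝓝 1) := by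
    have h := ((tendsto_mul_log_one_add_div_atTop 1).comp tendsto_natCast_atTop_atTop).add
      (hlog.const_mul (1 / 2))
    simp only [mul_zero, add_zero] at h
    exact h.congr fun n => by simp only [Function.comp_apply]; ring
  have hseq : Tendsto (fun n : ℕ => log (Stirling.stirlingSeq n)) atTop (𝓝 (log √π)) :=
    Stirling.tendsto_stirlingSeq_sqrt_pi.log (sqrt_pos.2 pi_pos).ne'
  have hval : log √π + log 2 / 2 + 1 - 1 = log (2 * π) / 2 := by
    rw [log_sqrt pi_pos.le, log_mul two_ne_zero pi_pos.ne']
    ring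
  rw [← tendsto_add_atTop_iff_nat 1, ← hval]
  refine (((hseq.add_const _).add_const _).sub hmul).congr' ?_
  filter_upwards [eventually_ne_atTop 0] with n hn
  push_cast
  exact (stirlingError_nat_add_one hn).symm

lemma log_Gamma_nat_add_mem_Icc {n : ℕ} (hn : 2 ≤ n) {t : ℝ} (ht₀ : 0 ≤ t) (ht₁ : t ≤ 1) :
    log (Gamma (n + t)) - log (Gamma n) - t * log n ∈ Set.Icc (-(t * log (n / (n - 1)))) 0 := by
  have hfeq : ∀ {y : ℝ}, 0 < y → (log ∘ Gamma) (y + 1) = (log ∘ Gamma) y + log y := fun hy => by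
    simp only [Function.comp_apply, Gamma_add_one hy.ne', log_mul hy.ne' (Gamma_pos_of_pos hy).ne']
    ring
  have hn1 : (0 : ℝ) < n - 1 := by
    have : (2 : ℝ) ≤ n := by exact_mod_cast hn
    linarith
  rcases ht₀.eq_or_lt with rfl | ht₀
  · simp
  have hle := BohrMollerup.f_add_nat_le (n := n) convexOn_log_Gamma hfeq (by lia) ht₀ ht₁
  have hge := BohrMollerup.f_add_nat_ge convexOn_log_Gamma hfeq hn ht₀
  simp only [Function.comp_apply] at hle hge
  rw [log_div (by positivity) hn1.ne']
  constructor <;> nlinarith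

lemma abs_stirlingError_nat_add_sub_le {n : ℕ} (hn : 2 ≤ n) {t : ℝ} (ht₀ : 0 ≤ t) (ht₁ : t ≤ 1) :
    |stirlingError (n + t) - stirlingError n| ≤ 3 / n := by
  have hn2 : (2 : ℝ) ≤ n := by exact_mod_cast hn
  have hn0 : (0 : ℝ) < n := by linarith
  obtain ⟨hΓ₀, hΓ₁⟩ := log_Gamma_nat_add_mem_Icc hn ht₀ ht₁
  have hlog_ratio : n * log (n / (n - 1)) ≤ 2 := by
    rw [← le_div_iff₀' hn0]
    refine (log_le_sub_one_of_pos (div_pos hn0 (by linarith))).trans ?_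
    rw [div_sub_one (by linarith), div_le_div_iff₀ (by linarith) hn0]
    linarith
  have hlog_nonneg : 0 ≤ log (n / (n - 1)) :=
    log_nonneg ((one_le_div (by linarith)).2 (by linarith))
  have hupper : n * (log (n + t) - log n) ≤ t := by
    rw [← log_div (by linarith) hn0.ne', ← le_div_iff₀' hn0]
    refine (log_le_sub_one_of_pos (by positivity)).trans (le_of_eq ?_)
    field_simp; ring
  have hlower : t ≤ (n + t) * (log (n + t) - log n) := by
    rw [← log_div (by linarith) hn0.ne', ← div_le_iff₀' (by linarith)]
    refine le_trans (le_of_eq ?_) (one_sub_inv_le_log_of_pos (by positivity))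
    field_simp; ring
  have hkey : stirlingError (n + t) - stirlingError n =
      (log (Gamma (n + t)) - log (Gamma n) - t * log n)
        + (t - (n + t - 1 / 2) * (log (n + t) - log n)) := by
    simp only [stirlingError]; ring
  rw [hkey, abs_le, ← neg_div, div_le_iff₀ hn0, le_div_iff₀ hn0]
  have hD : 0 ≤ n + t - 1 / 2 := by linarith
  constructor
  · nlinarith [mul_le_mul_of_nonneg_left hupper hD, mul_le_mul_of_nonneg_right ht₁
      (mul_nonneg hn0.le hlog_nonneg)]
  · nlinarith [mul_le_mul_of_nonneg_left hlower (mul_nonneg hD hn0.le)]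

theorem tendsto_stirlingError : Tendsto stirlingError atTop (𝓝 (log (2 * π) / 2)) := by
  have hfloor : Tendsto (fun x : ℝ => ⌊x⌋₊) atTop atTop := tendsto_nat_floor_atTop
  have hfract : Tendsto (fun x => stirlingError x - stirlingError ⌊x⌋₊) atTop (𝓝 0) := by
    refine squeeze_zero_norm' ?_ ((tendsto_const_div_atTop_nhds_zero_nat 3).comp hfloor)
    filter_upwards [eventually_ge_atTop 2] with x hx
    have h := abs_stirlingError_nat_add_sub_le (Nat.le_floor (by exact_mod_cast hx))
      (sub_nonneg.2 (Nat.floor_le (by linarith))) (by linarith [Nat.lt_floor_add_one x])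
    rwa [add_sub_cancel] at h
  simpa using (tendsto_stirlingError_nat.comp hfloor).add hfract

lemma abs_log_one_add_sub_self_add_sq_div_two_le {u : ℝ} (hu : |u| ≤ 1 / 2) :
    |log (1 + u) - u + u ^ 2 / 2| ≤ 2 * |u| ^ 3 := by
  have h := abs_log_sub_add_sum_range_le (x := -u) (by rw [abs_neg]; linarith) 2
  rw [sub_neg_eq_add, abs_neg] at h
  calc |log (1 + u) - u + u ^ 2 / 2|
      = |∑ i ∈ Finset.range 2, (-u) ^ (i + 1) / (i + 1) + log (1 + u)| := by
        congr 1; simp only [Finset.sum_range_succ, Finset.sum_range_zero]; ring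
    _ ≤ |u| ^ 3 / (1 - |u|) := h
    _ ≤ 2 * |u| ^ 3 := by
        rw [div_le_iff₀ (by linarith)]
        nlinarith [pow_nonneg (abs_nonneg u) 3]

lemma tendsto_mul_log_one_add_div_sqrt_sub (k : ℝ) :
    Tendsto (fun a => a * (log (1 + k / √a) - k / √a)) atTop (𝓝 (-(k ^ 2) / 2)) := by
  rw [tendsto_iff_norm_sub_tendsto_zero]
  refine squeeze_zero' (Eventually.of_forall fun _ => norm_nonneg _) ?_
    (tendsto_const_nhds.div_atTop tendsto_sqrt_atTop : Tendsto (fun a => 2 * |k| ^ 3 / √a) _ _)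
  filter_upwards [eventually_gt_atTop 0, tendsto_sqrt_atTop.eventually_ge_atTop (2 * |k|)]
    with a ha hak
  have hs : 0 < √a := sqrt_pos.2 ha
  have hu : |k / √a| ≤ 1 / 2 := by
    rw [abs_div, abs_of_pos hs, div_le_iff₀ hs]
    linarith
  have hsq : √a ^ 2 = a := sq_sqrt ha.le
  calc ‖a * (log (1 + k / √a) - k / √a) - -(k ^ 2) / 2‖
      = a * |log (1 + k / √a) - k / √a + (k / √a) ^ 2 / 2| := by
        rw [Real.norm_eq_abs, ← abs_of_pos ha, ← abs_mul, abs_of_pos ha]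
        congr 1
        rw [div_pow, hsq]
        field_simp
        ring
    _ ≤ a * (2 * |k / √a| ^ 3) :=
        mul_le_mul_of_nonneg_left (abs_log_one_add_sub_self_add_sq_div_two_le hu) ha.le
    _ = 2 * |k| ^ 3 / √a := by
        rw [abs_div, abs_of_pos hs, div_pow, pow_succ √a, hsq]
        field_simp

lemma eventually_pos_add_div_sqrt {l : ℝ} (hl : 0 < l) (k : ℝ) :
    ∀ᶠ a in atTop, 0 < l + k / √a := by
  have h : Tendsto (fun a => l + k / √a) atTop (𝓝 (l + 0)) :=
    (tendsto_const_nhds.div_atTop tendsto_sqrt_atTop).const_add l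
  exact h.eventually (lt_mem_nhds (by simpa using hl))

lemma tendsto_mul_sub_one_mul_log_add_div_sqrt {l : ℝ} (hl : 0 < l) (k : ℝ) :
    Tendsto (fun a => (a * l - 1) * log (l + k / √a) - (a * l - 1 / 2) * log l - √a * k) atTop
      (𝓝 (-(k ^ 2) / (2 * l) - log l / 2)) := by
  have ht : Tendsto (fun a => k / l / √a) atTop (𝓝 0) :=
    tendsto_const_nhds.div_atTop tendsto_sqrt_atTop
  have hlog : Tendsto (fun a => log (1 + k / l / √a)) atTop (𝓝 0) := by
    simpa using (ht.const_add 1).log (by norm_num)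
  have hlim := (((tendsto_mul_log_one_add_div_sqrt_sub (k / l)).const_mul l).sub hlog).sub_const
    (log l / 2)
  rw [show l * (-((k / l) ^ 2) / 2) - 0 - log l / 2 = -(k ^ 2) / (2 * l) - log l / 2 by
    field_simp; ring] at hlim
  refine hlim.congr' ?_
  filter_upwards [eventually_gt_atTop 0, eventually_pos_add_div_sqrt one_pos (k / l)]
    with a ha ht₁
  have hsplit : log (l + k / √a) = log l + log (1 + k / l / √a) := by
    rw [← log_mul hl.ne' ht₁.ne']
    congr 1
    field_simp
  have hat : l * (a * (k / l / √a)) = √a * k := by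
    calc l * (a * (k / l / √a)) = k * (a / √a) := by field_simp
      _ = √a * k := by rw [div_sqrt, mul_comm]
  rw [hsplit]
  linear_combination -hat

lemma log_Gamma_sub_log_Gamma_mul_eq_stirlingError {a l₁ l₂ l₃ : ℝ} (ha : 0 < a) (hl₁ : 0 < l₁)
    (hl₂ : 0 < l₂) (hl₃ : 0 < l₃) (hl : l₁ + l₂ + l₃ = 1) :
    log (Gamma a) - log (Gamma (a * l₁)) - log (Gamma (a * l₂)) - log (Gamma (a * l₃)) - log a =
      stirlingError a - stirlingError (a * l₁) - stirlingError (a * l₂) - stirlingError (a * l₃)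
        - (a * l₁ - 1 / 2) * log l₁ - (a * l₂ - 1 / 2) * log l₂ - (a * l₃ - 1 / 2) * log l₃ := by
  obtain rfl : l₃ = 1 - l₁ - l₂ := by linarith
  simp only [stirlingError]
  rw [log_mul ha.ne' hl₁.ne', log_mul ha.ne' hl₂.ne', log_mul ha.ne' hl₃.ne']
  ring

theorem tendsto_log_scaled_dirichlet_density {l₁ l₂ l₃ : ℝ} (hl₁ : 0 < l₁) (hl₂ : 0 < l₂)
    (hl₃ : 0 < l₃) (hl : l₁ + l₂ + l₃ = 1) {k₁ k₂ k₃ : ℝ} (hk : k₁ + k₂ + k₃ = 0) :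
    Tendsto (fun a => log (Gamma a) - log (Gamma (a * l₁)) - log (Gamma (a * l₂))
        - log (Gamma (a * l₃)) - log a + (a * l₁ - 1) * log (l₁ + k₁ / √a)
        + (a * l₂ - 1) * log (l₂ + k₂ / √a) + (a * l₃ - 1) * log (l₃ + k₃ / √a)) atTop
      (𝓝 (-log (2 * π) + (-(k₁ ^ 2) / (2 * l₁) - log l₁ / 2) + (-(k₂ ^ 2) / (2 * l₂) - log l₂ / 2)
        + (-(k₃ ^ 2) / (2 * l₃) - log l₃ / 2))) := by
  have hmul {l : ℝ} (hl : 0 < l) : Tendsto (fun a => a * l) atTop atTop :=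
    tendsto_id.atTop_mul_const hl
  have hstirling := ((tendsto_stirlingError.sub (tendsto_stirlingError.comp (hmul hl₁))).sub
    (tendsto_stirlingError.comp (hmul hl₂))).sub (tendsto_stirlingError.comp (hmul hl₃))
  have hcoord := ((hstirling.add (tendsto_mul_sub_one_mul_log_add_div_sqrt hl₁ k₁)).add
    (tendsto_mul_sub_one_mul_log_add_div_sqrt hl₂ k₂)).add
    (tendsto_mul_sub_one_mul_log_add_div_sqrt hl₃ k₃)
  convert hcoord.congr' ?_ using 2
  · ring
  filter_upwards [eventually_gt_atTop 0] with a ha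
  simp only [Function.comp_apply]
  rw [log_Gamma_sub_log_Gamma_mul_eq_stirlingError ha hl₁ hl₂ hl₃ hl]
  linear_combination -√a * hk

lemma dirichletPDF2_eq_exp {a₁ a₂ a₃ x₁ x₂ : ℝ} (ha₁ : 0 < a₁) (ha₂ : 0 < a₂) (ha₃ : 0 < a₃)
    (hx₁ : 0 < x₁) (hx₂ : 0 < x₂) (hx₃ : 0 < 1 - x₁ - x₂) :
    dirichletPDF2 a₁ a₂ a₃ x₁ x₂ = exp (log (Gamma (a₁ + a₂ + a₃)) - log (Gamma a₁)
      - log (Gamma a₂) - log (Gamma a₃) + (a₁ - 1) * log x₁ + (a₂ - 1) * log x₂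
      + (a₃ - 1) * log (1 - x₁ - x₂)) := by
  have hΓ {s : ℝ} (hs : 0 < s) : exp (log (Gamma s)) = Gamma s := exp_log (Gamma_pos_of_pos hs)
  rw [dirichletPDF2, if_pos ⟨hx₁.le, hx₂.le, by linarith⟩, rpow_def_of_pos hx₁,
    rpow_def_of_pos hx₂, rpow_def_of_pos hx₃, mul_comm (log x₁), mul_comm (log x₂),
    mul_comm (log (1 - x₁ - x₂))]
  simp only [exp_add, exp_sub, hΓ ha₁, hΓ ha₂, hΓ ha₃, hΓ (by positivity : 0 < a₁ + a₂ + a₃)]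
  ring

lemma det_multinomialCov (l₁ l₂ : ℝ) :
    (!![l₁ * (1 - l₁), -(l₁ * l₂); -(l₁ * l₂), l₂ * (1 - l₂)] : Matrix (Fin 2) (Fin 2) ℝ).det =
      l₁ * l₂ * (1 - l₁ - l₂) := by
  rw [det_fin_two_of]
  ring

lemma dotProduct_inv_multinomialCov_mulVec {l₁ l₂ : ℝ} (hl₁ : 0 < l₁) (hl₂ : 0 < l₂)
    (hl₃ : 0 < 1 - l₁ - l₂) (y₁ y₂ : ℝ) :
    ![y₁, y₂] ⬝ᵥ ((!![l₁ * (1 - l₁), -(l₁ * l₂); -(l₁ * l₂), l₂ * (1 - l₂)] :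
        Matrix (Fin 2) (Fin 2) ℝ)⁻¹ *ᵥ ![y₁, y₂]) =
      y₁ ^ 2 / l₁ + y₂ ^ 2 / l₂ + (y₁ + y₂) ^ 2 / (1 - l₁ - l₂) := by
  rw [inv_def, adjugate_fin_two_of, Ring.inverse_eq_inv', det_multinomialCov]
  simp only [mulVec, dotProduct, Fin.sum_univ_two, Matrix.smul_apply, of_apply, cons_val',
    cons_val_zero, cons_val_one, cons_val_fin_one, smul_eq_mul]
  field_simp
  ring

lemma bivariateGaussian_multinomialCov_eq_exp {l₁ l₂ : ℝ} (hl₁ : 0 < l₁) (hl₂ : 0 < l₂)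
    (hl₃ : 0 < 1 - l₁ - l₂) (y₁ y₂ : ℝ) :
    1 / (2 * π * √(!![l₁ * (1 - l₁), -(l₁ * l₂); -(l₁ * l₂), l₂ * (1 - l₂)] :
        Matrix (Fin 2) (Fin 2) ℝ).det) *
      exp (-(![y₁, y₂] ⬝ᵥ ((!![l₁ * (1 - l₁), -(l₁ * l₂); -(l₁ * l₂), l₂ * (1 - l₂)] :
        Matrix (Fin 2) (Fin 2) ℝ)⁻¹ *ᵥ ![y₁, y₂])) / 2) =
    exp (-log (2 * π) + (-(y₁ ^ 2) / (2 * l₁) - log l₁ / 2) + (-(y₂ ^ 2) / (2 * l₂) - log l₂ / 2)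
      + (-((-(y₁ + y₂)) ^ 2) / (2 * (1 - l₁ - l₂)) - log (1 - l₁ - l₂) / 2)) := by
  rw [det_multinomialCov, dotProduct_inv_multinomialCov_mulVec hl₁ hl₂ hl₃]
  have hsqrt : √(l₁ * l₂ * (1 - l₁ - l₂)) =
      exp (log l₁ / 2 + log l₂ / 2 + log (1 - l₁ - l₂) / 2) := by
    rw [sqrt_eq_rpow, rpow_def_of_pos (by positivity), log_mul (by positivity) hl₃.ne',
      log_mul hl₁.ne' hl₂.ne']
    ring_nf
  have h2π : 2 * π = exp (log (2 * π)) := (exp_log (by positivity)).symm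
  rw [hsqrt]
  nth_rw 1 [h2π]
  rw [← exp_add, one_div, ← exp_neg, ← exp_add]
  congr 1
  field_simp
  ring

/-- The joint density of `(√a(X₁ₐ - l₁), √a(X₂ₐ - l₂))`, where `(X₁ₐ, X₂ₐ)` are the first two
coordinates of a `D(al₁, al₂, a(1-l₁-l₂))` vector, converges pointwise to the bivariate normal
density with mean zero and covariance `Σ = [[l₁(1-l₁), -l₁l₂], [-l₁l₂, l₂(1-l₂)]]`. -/
theorem dirichlet_scaled_density_tendsto_bivariate_gaussian (l₁ l₂ : ℝ)
    (hl₁ : 0 < l₁) (hl₂ : 0 < l₂) (hl : l₁ + l₂ < 1) (y₁ y₂ : ℝ) :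
    Tendsto (fun a : ℝ =>
        (1 / a) * dirichletPDF2 (a * l₁) (a * l₂) (a * (1 - l₁ - l₂))
          (y₁ / Real.sqrt a + l₁) (y₂ / Real.sqrt a + l₂))
      atTop
      (nhds
        ((1 / (2 * Real.pi *
            Real.sqrt (!![l₁ * (1 - l₁), -(l₁ * l₂);
              -(l₁ * l₂), l₂ * (1 - l₂)] : Matrix (Fin 2) (Fin 2) ℝ).det)) *
          Real.exp (-(![y₁, y₂] ⬝ᵥ
            ((!![l₁ * (1 - l₁), -(l₁ * l₂);
              -(l₁ * l₂), l₂ * (1 - l₂)] : Matrix (Fin 2) (Fin 2) ℝ)⁻¹ *ᵥ ![y₁, y₂])) / 2))) := by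
  have hl₃ : 0 < 1 - l₁ - l₂ := by linarith
  rw [bivariateGaussian_multinomialCov_eq_exp hl₁ hl₂ hl₃]
  refine ((continuous_exp.tendsto _).comp (tendsto_log_scaled_dirichlet_density hl₁ hl₂ hl₃
    (by ring) (show y₁ + y₂ + -(y₁ + y₂) = 0 by ring))).congr' ?_
  filter_upwards [eventually_gt_atTop 0, eventually_pos_add_div_sqrt hl₁ y₁,
    eventually_pos_add_div_sqrt hl₂ y₂, eventually_pos_add_div_sqrt hl₃ (-(y₁ + y₂))]
    with a ha hx₁ hx₂ hx₃
  have hx : 1 - (y₁ / √a + l₁) - (y₂ / √a + l₂) = 1 - l₁ - l₂ + -(y₁ + y₂) / √a := by ring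
  rw [dirichletPDF2_eq_exp (by positivity) (by positivity) (by positivity) (by linarith)
    (by linarith) (by linarith), hx, show a * l₁ + a * l₂ + a * (1 - l₁ - l₂) = a by ring,
    add_comm (y₁ / √a), add_comm (y₂ / √a)]
  have hinv : 1 / a = exp (-log a) := by rw [exp_neg, exp_log ha, one_div]
  rw [hinv, ← exp_add, Function.comp_apply]
  congr 1
  ring
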